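/- arXiv:2012.06403 — 4 statements merged into one kernel-verified Lean document; each statement's English description precedes it below -/
import Mathlib

section
/- Let A and B be commutative Fréchet algebras. A function σ : Δ(A × B) → ℂ is a BSE-function if and only if the function σ₁ : Δ(A) → ℂ, σ₁(φ) := σ(φ∘pr₁), is a BSE-function on Δ(A) and the function σ₂ : Δ(B) → ℂ, σ₂(ψ) := σ(ψ∘pr₂), is a BSE-function on Δ(B). In other words, C_BSE(Δ(A ⊕ B)) = C_BSE(Δ(A)) × C_BSE(Δ(B)). -/
open WeakDual Filter Topology Bornology

/-- A function `σ` on the character space of a commutative topological `ℂ`-algebra `A` is a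
*BSE-function* if it is bounded and continuous and there are a von Neumann bounded set `M ⊆ A`
and a constant `β ≥ 0` such that `‖∑ cᵢ σ(φᵢ)‖ ≤ β ⬝ sup_{a ∈ M} ‖∑ cᵢ φᵢ(a)‖` for all finite
families of coefficients `cᵢ ∈ ℂ` and characters `φᵢ ∈ Δ(A)`. -/
def IsBSEFunction {A : Type*} [NonUnitalCommRing A] [Module ℂ A] [TopologicalSpace A]
    (σ : characterSpace ℂ A → ℂ) : Prop :=
  Continuous σ ∧ (∃ C : ℝ, ∀ φ, ‖σ φ‖ ≤ C) ∧
    ∃ (M : Set A) (β : ℝ), 0 ≤ β ∧ IsVonNBounded ℂ M ∧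
      ∀ (n : ℕ) (c : Fin n → ℂ) (φ : Fin n → characterSpace ℂ A),
        ‖∑ i, c i * σ (φ i)‖ ≤ β * ⨆ a ∈ M, ‖∑ i, c i * (φ i) a‖

/-- A (not necessarily unital) commutative topological `ℂ`-algebra is a *Fréchet algebra* if it
is complete and its topology is generated by a countable increasing family of submultiplicative
seminorms (hence it is a complete metrizable locally convex algebra). -/
def IsFrechetAlgebra (A : Type*) [NonUnitalCommRing A] [Module ℂ A]
    [UniformSpace A] : Prop :=
  ∃ p : ℕ → Seminorm ℂ A, WithSeminorms p ∧ Monotone p ∧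
    (∀ (ℓ : ℕ) (x y : A), p ℓ (x * y) ≤ p ℓ x * p ℓ y) ∧ CompleteSpace A

section CharMaps

variable {A B : Type*}
  [NonUnitalCommRing A] [Module ℂ A] [TopologicalSpace A]
  [NonUnitalCommRing B] [Module ℂ B] [TopologicalSpace B]

/-- The character `φ ∘ pr₁` of `A × B` associated to a character `φ` of `A`. -/
noncomputable def charFst (φ : characterSpace ℂ A) : characterSpace ℂ (A × B) :=
  ⟨((CharacterSpace.toCLM φ).comp (ContinuousLinearMap.fst ℂ A B) : A × B →L[ℂ] ℂ), by
    refine ⟨?_, fun x y => ?_⟩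
    · intro h
      apply φ.2.1
      refine DFunLike.ext _ _ fun a => ?_
      have := DFunLike.congr_fun h (a, 0)
      exact this
    · exact φ.2.2 x.1 y.1⟩

/-- The character `ψ ∘ pr₂` of `A × B` associated to a character `ψ` of `B`. -/
noncomputable def charSnd (ψ : characterSpace ℂ B) : characterSpace ℂ (A × B) :=
  ⟨((CharacterSpace.toCLM ψ).comp (ContinuousLinearMap.snd ℂ A B) : A × B →L[ℂ] ℂ), by
    refine ⟨?_, fun x y => ?_⟩
    · intro h
      apply ψ.2.1
      refine DFunLike.ext _ _ fun b => ?_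
      have := DFunLike.congr_fun h (0, b)
      exact this
    · exact ψ.2.2 x.2 y.2⟩

end CharMaps

/-!
Since `(a, 0) * (0, b) = 0`, every character of `A × B` vanishes on `A × 0` or on `0 × B`, and
it cannot vanish on both. Hence `Δ(A × B)` is the disjoint union of the two open sets
`{χ | ∃ a, χ (a, 0) ≠ 0}` and `{χ | ∃ b, χ (0, b) ≠ 0}`, onto which `charFst` and `charSnd` are
open embeddings. A BSE-function on `Δ(A × B)` pulls back along `charFst` with the bounded set
`pr₁ M`, and along `charSnd` with `pr₂ M`. Conversely, if `σ ∘ charFst` and `σ ∘ charSnd` are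
BSE-functions with data `(M₁, β₁)` and `(M₂, β₂)`, then `σ` is one with the bounded set
`M₁ × 0 ∪ 0 × M₂` and the constant `β₁ + β₂`: split a sum `∑ cᵢ σ(χᵢ)` according to the piece
containing `χᵢ`, and on `M₁ × 0` only the characters of the first piece contribute.
-/

lemma biSup_comp_le_of_mapsTo {α β : Type*} {s : Set α} {t : Set β} {f : α → β} {g : β → ℝ}
    (hg : ∀ y, 0 ≤ g y) (hbdd : BddAbove (g '' t)) (hf : Set.MapsTo f s t) :
    ⨆ x ∈ s, g (f x) ≤ ⨆ y ∈ t, g y := by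
  have hnonneg : 0 ≤ ⨆ y ∈ t, g y := Real.iSup_nonneg fun y => Real.iSup_nonneg fun _ => hg y
  have hbdd' : BddAbove (⋃ y, Set.range fun _ : y ∈ t => g y) := by
    obtain ⟨C, hC⟩ := hbdd
    refine ⟨C, ?_⟩
    simp only [upperBounds, Set.mem_iUnion, Set.mem_range]
    rintro _ ⟨y, hy, rfl⟩
    exact hC ⟨y, hy, rfl⟩
  exact Real.iSup_le (fun x => Real.iSup_le
    (fun hx => le_ciSup₂ (f := fun y (_ : y ∈ t) => g y) hbdd' (f x) (hf hx)) hnonneg) hnonneg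

section CharacterSpace

variable {A C : Type*} [NonUnitalCommRing A] [Module ℂ A] [TopologicalSpace A]
  [NonUnitalCommRing C] [Module ℂ C] [TopologicalSpace C]

lemma continuous_characterSpace_apply (a : A) : Continuous fun φ : characterSpace ℂ A => φ a :=
  (eval_continuous a).comp continuous_subtype_val

lemma continuous_characterSpace_of_apply {X : Type*} [TopologicalSpace X]
    {f : X → characterSpace ℂ A} (h : ∀ a, Continuous fun x => f x a) : Continuous f :=
  (continuous_of_continuous_eval (g := fun x => (f x : WeakDual ℂ A)) h).subtype_mk _

lemma isEmbedding_characterSpace_coeFn :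
    IsEmbedding fun φ : characterSpace ℂ A => (φ : A → ℂ) := by
  have : IsEmbedding fun φ : WeakDual ℂ A => (φ : A → ℂ) :=
    WeakBilin.isEmbedding ContinuousLinearMap.coe_injective
  exact this.comp IsEmbedding.subtypeVal

lemma exists_characterSpace_apply_ne_zero (φ : characterSpace ℂ A) : ∃ a, φ a ≠ 0 := by
  obtain ⟨a, ha⟩ := DFunLike.ne_iff.1 φ.2.1
  exact ⟨a, ha⟩

lemma bddAbove_norm_sum_image {ι : Type*} [Fintype ι] {M : Set A} (hM : IsVonNBounded ℂ M)
    (c : ι → ℂ) (φ : ι → characterSpace ℂ A) :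
    BddAbove ((fun a => ‖∑ i, c i * φ i a‖) '' M) := by
  let L : A →L[ℂ] ℂ := ∑ i, c i • CharacterSpace.toCLM (φ i)
  obtain ⟨r, hr⟩ := (NormedSpace.image_isVonNBounded_iff ℂ).1 (hM.image L)
  refine ⟨r, ?_⟩
  rintro _ ⟨a, ha, rfl⟩
  simpa [L, FunLike.coe_sum, Finset.sum_apply] using hr a ha

def IsBSEBound (σ : characterSpace ℂ A → ℂ) (M : Set A) (β : ℝ) : Prop :=
  ∀ (n : ℕ) (c : Fin n → ℂ) (φ : Fin n → characterSpace ℂ A),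
    ‖∑ i, c i * σ (φ i)‖ ≤ β * ⨆ a ∈ M, ‖∑ i, c i * (φ i) a‖

lemma IsBSEBound.norm_sum_le {σ : characterSpace ℂ A → ℂ} {M : Set A} {β : ℝ}
    (h : IsBSEBound σ M β) {ι : Type*} [Fintype ι] (c : ι → ℂ) (φ : ι → characterSpace ℂ A) :
    ‖∑ i, c i * σ (φ i)‖ ≤ β * ⨆ a ∈ M, ‖∑ i, c i * φ i a‖ := by
  let e := (Fintype.equivFin ι).symm
  simpa only [Function.comp_apply, e.sum_comp fun i => c i * σ (φ i),
    fun a => e.sum_comp fun i => c i * φ i a] using h _ (c ∘ e) (φ ∘ e)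

theorem IsBSEFunction.comp {σ : characterSpace ℂ C → ℂ} (hσ : IsBSEFunction σ)
    {f : characterSpace ℂ A → characterSpace ℂ C} (T : C →L[ℂ] A)
    (hf : ∀ φ x, f φ x = φ (T x)) : IsBSEFunction (σ ∘ f) := by
  obtain ⟨hc, ⟨K, hK⟩, M, β, hβ, hM, hbound⟩ := hσ
  have hTM : IsVonNBounded ℂ (T '' M) := hM.image T
  have hfc : Continuous f := continuous_characterSpace_of_apply fun x => by
    simpa only [hf] using continuous_characterSpace_apply (T x)
  refine ⟨hc.comp hfc, ⟨K, fun φ => hK (f φ)⟩, T '' M, β, hβ, hTM, fun n c φ => ?_⟩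
  calc ‖∑ i, c i * σ (f (φ i))‖ ≤ β * ⨆ x ∈ M, ‖∑ i, c i * φ i (T x)‖ := by
        simpa only [Function.comp_apply, hf] using hbound n c (f ∘ φ)
    _ ≤ β * ⨆ a ∈ T '' M, ‖∑ i, c i * φ i a‖ := by
        gcongr
        exact biSup_comp_le_of_mapsTo (fun _ => norm_nonneg _)
          (bddAbove_norm_sum_image hTM c φ) (Set.mapsTo_image T M)

end CharacterSpace

section Prod

variable {A B : Type*}
  [NonUnitalCommRing A] [Module ℂ A] [TopologicalSpace A]
  [NonUnitalCommRing B] [Module ℂ B] [TopologicalSpace B]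

@[simp]
lemma charFst_apply (φ : characterSpace ℂ A) (x : A × B) : charFst φ x = φ x.1 := rfl

@[simp]
lemma charSnd_apply (ψ : characterSpace ℂ B) (x : A × B) : charSnd ψ x = ψ x.2 := rfl

lemma apply_inl_mul_apply_inr (χ : characterSpace ℂ (A × B)) (a : A) (b : B) :
    χ (a, 0) * χ (0, b) = 0 := by
  rw [← map_mul, Prod.mk_mul_mk, mul_zero, zero_mul, ← Prod.zero_eq_mk, map_zero]

lemma apply_eq_apply_inl_add_apply_inr (χ : characterSpace ℂ (A × B)) (x : A × B) :
    χ x = χ (x.1, 0) + χ (0, x.2) := by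
  rw [← map_add, Prod.mk_add_mk, add_zero, zero_add]

noncomputable def restrFst (χ : characterSpace ℂ (A × B)) (h : ∃ a, χ (a, 0) ≠ 0) :
    characterSpace ℂ A :=
  ⟨(CharacterSpace.toCLM χ).comp (ContinuousLinearMap.inl ℂ A B), fun h0 => by
    obtain ⟨a, ha⟩ := h
    exact ha (DFunLike.congr_fun h0 a), fun x y => by
    change χ (x * y, 0) = χ (x, 0) * χ (y, 0)
    rw [← map_mul, Prod.mk_mul_mk, mul_zero]⟩

noncomputable def restrSnd (χ : characterSpace ℂ (A × B)) (h : ∃ b, χ (0, b) ≠ 0) :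
    characterSpace ℂ B :=
  ⟨(CharacterSpace.toCLM χ).comp (ContinuousLinearMap.inr ℂ A B), fun h0 => by
    obtain ⟨b, hb⟩ := h
    exact hb (DFunLike.congr_fun h0 b), fun x y => by
    change χ (0, x * y) = χ (0, x) * χ (0, y)
    rw [← map_mul, Prod.mk_mul_mk, mul_zero]⟩

@[simp]
lemma restrFst_apply (χ : characterSpace ℂ (A × B)) (h : ∃ a, χ (a, 0) ≠ 0) (a : A) :
    restrFst χ h a = χ (a, 0) := rfl

@[simp]
lemma restrSnd_apply (χ : characterSpace ℂ (A × B)) (h : ∃ b, χ (0, b) ≠ 0) (b : B) :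
    restrSnd χ h b = χ (0, b) := rfl

lemma charFst_restrFst (χ : characterSpace ℂ (A × B)) (h : ∃ a, χ (a, 0) ≠ 0) :
    charFst (restrFst χ h) = χ := by
  obtain ⟨a, ha⟩ := h
  ext x
  have hx : χ (0, x.2) = 0 := (mul_eq_zero.1 (apply_inl_mul_apply_inr χ a x.2)).resolve_left ha
  rw [apply_eq_apply_inl_add_apply_inr χ x, hx, add_zero, charFst_apply, restrFst_apply]

lemma charSnd_restrSnd (χ : characterSpace ℂ (A × B)) (h : ∃ b, χ (0, b) ≠ 0) :
    charSnd (restrSnd χ h) = χ := by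
  obtain ⟨b, hb⟩ := h
  ext x
  have hx : χ (x.1, 0) = 0 := (mul_eq_zero.1 (apply_inl_mul_apply_inr χ x.1 b)).resolve_right hb
  rw [apply_eq_apply_inl_add_apply_inr χ x, hx, zero_add, charSnd_apply, restrSnd_apply]

lemma exists_apply_inr_ne_zero_iff (χ : characterSpace ℂ (A × B)) :
    (∃ b, χ (0, b) ≠ 0) ↔ ¬∃ a, χ (a, 0) ≠ 0 := by
  refine ⟨fun ⟨b, hb⟩ ⟨a, ha⟩ => mul_ne_zero ha hb (apply_inl_mul_apply_inr χ a b), fun h => ?_⟩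
  by_contra h'
  simp only [not_exists, not_not] at h h'
  obtain ⟨x, hx⟩ := exists_characterSpace_apply_ne_zero χ
  rw [apply_eq_apply_inl_add_apply_inr, h, h', add_zero] at hx
  exact hx rfl

lemma range_charFst :
    Set.range (charFst : characterSpace ℂ A → characterSpace ℂ (A × B)) =
      {χ | ∃ a, χ (a, 0) ≠ 0} := by
  refine Set.Subset.antisymm ?_ fun χ h => ⟨restrFst χ h, charFst_restrFst χ h⟩
  rintro _ ⟨φ, rfl⟩
  exact exists_characterSpace_apply_ne_zero φ

lemma range_charSnd :
    Set.range (charSnd : characterSpace ℂ B → characterSpace ℂ (A × B)) =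
      {χ | ∃ b, χ (0, b) ≠ 0} := by
  refine Set.Subset.antisymm ?_ fun χ h => ⟨restrSnd χ h, charSnd_restrSnd χ h⟩
  rintro _ ⟨ψ, rfl⟩
  exact exists_characterSpace_apply_ne_zero ψ

lemma exists_charFst_or_charSnd (χ : characterSpace ℂ (A × B)) :
    (∃ φ, charFst φ = χ) ∨ ∃ ψ, charSnd ψ = χ := by
  change χ ∈ Set.range charFst ∨ χ ∈ Set.range charSnd
  rw [range_charFst, range_charSnd, Set.mem_ofPred_eq, Set.mem_ofPred_eq,
    exists_apply_inr_ne_zero_iff]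
  exact em _

lemma isOpenEmbedding_charFst :
    IsOpenEmbedding (charFst : characterSpace ℂ A → characterSpace ℂ (A × B)) := by
  have hc : Continuous (charFst : characterSpace ℂ A → characterSpace ℂ (A × B)) :=
    continuous_characterSpace_of_apply fun x => continuous_characterSpace_apply x.1
  refine ⟨.of_comp hc (g := fun χ (a : A) => χ (a, (0 : B)))
    (continuous_pi fun a => continuous_characterSpace_apply _)
    isEmbedding_characterSpace_coeFn, ?_⟩
  rw [range_charFst, Set.ofPred_exists]
  exact isOpen_iUnion fun a => isOpen_ne_fun (continuous_characterSpace_apply _) continuous_const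

lemma isOpenEmbedding_charSnd :
    IsOpenEmbedding (charSnd : characterSpace ℂ B → characterSpace ℂ (A × B)) := by
  have hc : Continuous (charSnd : characterSpace ℂ B → characterSpace ℂ (A × B)) :=
    continuous_characterSpace_of_apply fun x => continuous_characterSpace_apply x.2
  refine ⟨.of_comp hc (g := fun χ (b : B) => χ ((0 : A), b))
    (continuous_pi fun b => continuous_characterSpace_apply _)
    isEmbedding_characterSpace_coeFn, ?_⟩
  rw [range_charSnd, Set.ofPred_exists]
  exact isOpen_iUnion fun b => isOpen_ne_fun (continuous_characterSpace_apply _) continuous_const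

lemma continuous_of_comp_charFst_of_comp_charSnd {X : Type*} [TopologicalSpace X]
    {σ : characterSpace ℂ (A × B) → X} (h₁ : Continuous (σ ∘ charFst))
    (h₂ : Continuous (σ ∘ charSnd)) : Continuous σ := by
  refine continuous_iff_continuousAt.2 fun χ => ?_
  rcases exists_charFst_or_charSnd χ with ⟨φ, rfl⟩ | ⟨ψ, rfl⟩
  · exact isOpenEmbedding_charFst.continuousAt_iff.1 h₁.continuousAt
  · exact isOpenEmbedding_charSnd.continuousAt_iff.1 h₂.continuousAt

open Classical in
lemma IsBSEBound.norm_sum_filter_le_of_comp_charFst {σ : characterSpace ℂ (A × B) → ℂ}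
    {M : Set A} {β : ℝ} (h : IsBSEBound (σ ∘ charFst) M β) {ι : Type*} [Fintype ι]
    (c : ι → ℂ) (χ : ι → characterSpace ℂ (A × B)) :
    ‖∑ i with ∃ a, χ i (a, 0) ≠ 0, c i * σ (χ i)‖ ≤ β * ⨆ a ∈ M, ‖∑ i, c i * χ i (a, 0)‖ := by
  have hmem (i : ι) :
      i ∈ Finset.univ.filter (fun i => ∃ a, χ i (a, 0) ≠ 0) ↔ ∃ a, χ i (a, 0) ≠ 0 := by
    simp
  have hsum (a : A) : ∑ i : {i // ∃ a, χ i (a, 0) ≠ 0}, c i * restrFst (χ i) i.2 a =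
      ∑ i, c i * χ i (a, 0) := by
    simp only [restrFst_apply]
    rw [← Finset.sum_subtype _ hmem (fun i => c i * χ i (a, 0)), Finset.sum_filter_of_ne]
    exact fun i _ hi => ⟨a, right_ne_zero_of_mul hi⟩
  have key := h.norm_sum_le (fun i : {i // ∃ a, χ i (a, 0) ≠ 0} => c i)
    fun i => restrFst (χ i) i.2
  simp only [Function.comp_apply, charFst_restrFst, hsum] at key
  rwa [Finset.sum_subtype _ hmem]

open Classical in
lemma IsBSEBound.norm_sum_filter_le_of_comp_charSnd {σ : characterSpace ℂ (A × B) → ℂ}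
    {M : Set B} {β : ℝ} (h : IsBSEBound (σ ∘ charSnd) M β) {ι : Type*} [Fintype ι]
    (c : ι → ℂ) (χ : ι → characterSpace ℂ (A × B)) :
    ‖∑ i with ∃ b, χ i (0, b) ≠ 0, c i * σ (χ i)‖ ≤ β * ⨆ b ∈ M, ‖∑ i, c i * χ i (0, b)‖ := by
  have hmem (i : ι) :
      i ∈ Finset.univ.filter (fun i => ∃ b, χ i (0, b) ≠ 0) ↔ ∃ b, χ i (0, b) ≠ 0 := by
    simp
  have hsum (b : B) : ∑ i : {i // ∃ b, χ i (0, b) ≠ 0}, c i * restrSnd (χ i) i.2 b =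
      ∑ i, c i * χ i (0, b) := by
    simp only [restrSnd_apply]
    rw [← Finset.sum_subtype _ hmem (fun i => c i * χ i (0, b)), Finset.sum_filter_of_ne]
    exact fun i _ hi => ⟨b, right_ne_zero_of_mul hi⟩
  have key := h.norm_sum_le (fun i : {i // ∃ b, χ i (0, b) ≠ 0} => c i)
    fun i => restrSnd (χ i) i.2
  simp only [Function.comp_apply, charSnd_restrSnd, hsum] at key
  rwa [Finset.sum_subtype _ hmem]

theorem IsBSEFunction.of_comp_charFst_of_comp_charSnd {σ : characterSpace ℂ (A × B) → ℂ}
    (h₁ : IsBSEFunction (σ ∘ charFst)) (h₂ : IsBSEFunction (σ ∘ charSnd)) :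
    IsBSEFunction σ := by
  classical
  obtain ⟨hc₁, ⟨K₁, hK₁⟩, M₁, β₁, hβ₁, hM₁, hb₁⟩ := h₁
  obtain ⟨hc₂, ⟨K₂, hK₂⟩, M₂, β₂, hβ₂, hM₂, hb₂⟩ := h₂
  let M : Set (A × B) :=
    ContinuousLinearMap.inl ℂ A B '' M₁ ∪ ContinuousLinearMap.inr ℂ A B '' M₂
  have hM : IsVonNBounded ℂ M := (hM₁.image _).union (hM₂.image _)
  have hK (χ : characterSpace ℂ (A × B)) : ‖σ χ‖ ≤ max K₁ K₂ := by
    rcases exists_charFst_or_charSnd χ with ⟨φ, rfl⟩ | ⟨ψ, rfl⟩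
    · exact le_max_of_le_left (hK₁ φ)
    · exact le_max_of_le_right (hK₂ ψ)
  refine ⟨continuous_of_comp_charFst_of_comp_charSnd hc₁ hc₂, ⟨max K₁ K₂, hK⟩, M, β₁ + β₂,
    add_nonneg hβ₁ hβ₂, hM, fun n c χ => ?_⟩
  set S := ⨆ x ∈ M, ‖∑ i, c i * χ i x‖
  have hS₁ : ⨆ a ∈ M₁, ‖∑ i, c i * χ i (a, 0)‖ ≤ S :=
    biSup_comp_le_of_mapsTo (fun _ => norm_nonneg _) (bddAbove_norm_sum_image hM c χ)
      fun a ha => Or.inl ⟨a, ha, rfl⟩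
  have hS₂ : ⨆ b ∈ M₂, ‖∑ i, c i * χ i (0, b)‖ ≤ S :=
    biSup_comp_le_of_mapsTo (fun _ => norm_nonneg _) (bddAbove_norm_sum_image hM c χ)
      fun b hb => Or.inr ⟨b, hb, rfl⟩
  have hsplit : ∑ i, c i * σ (χ i) = ∑ i with ∃ a, χ i (a, 0) ≠ 0, c i * σ (χ i) +
      ∑ i with ∃ b, χ i (0, b) ≠ 0, c i * σ (χ i) := by
    simp only [exists_apply_inr_ne_zero_iff]
    exact (Finset.sum_filter_add_sum_filter_not _ _ _).symm
  calc ‖∑ i, c i * σ (χ i)‖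
      ≤ ‖∑ i with ∃ a, χ i (a, 0) ≠ 0, c i * σ (χ i)‖ +
          ‖∑ i with ∃ b, χ i (0, b) ≠ 0, c i * σ (χ i)‖ := hsplit ▸ norm_add_le _ _
    _ ≤ β₁ * S + β₂ * S := by
        gcongr
        · exact (IsBSEBound.norm_sum_filter_le_of_comp_charFst hb₁ c χ).trans (by gcongr)
        · exact (IsBSEBound.norm_sum_filter_le_of_comp_charSnd hb₂ c χ).trans (by gcongr)
    _ = (β₁ + β₂) * S := (add_mul _ _ _).symm

end Prod

theorem isBSEFunction_prod_iff_general
    {A B : Type*}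
    [NonUnitalCommRing A] [Module ℂ A]
    [UniformSpace A]
    [NonUnitalCommRing B] [Module ℂ B]
    [UniformSpace B]
    (σ : characterSpace ℂ (A × B) → ℂ) :
    IsBSEFunction σ ↔
      IsBSEFunction (fun φ : characterSpace ℂ A => σ (charFst φ)) ∧
      IsBSEFunction (fun ψ : characterSpace ℂ B => σ (charSnd ψ)) :=
  ⟨fun h => ⟨h.comp (ContinuousLinearMap.fst ℂ A B) fun _ _ => rfl,
      h.comp (ContinuousLinearMap.snd ℂ A B) fun _ _ => rfl⟩,
    fun h => .of_comp_charFst_of_comp_charSnd h.1 h.2⟩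

/-- Let `A` and `B` be commutative Fréchet algebras.  A function
`σ : Δ(A × B) → ℂ` is a BSE-function if and only if `σ₁ : φ ↦ σ(φ ∘ pr₁)` is a BSE-function on
`Δ(A)` and `σ₂ : ψ ↦ σ(ψ ∘ pr₂)` is a BSE-function on `Δ(B)`.  In other words,
`C_BSE(Δ(A ⊕ B)) = C_BSE(Δ(A)) × C_BSE(Δ(B))`. -/
theorem isBSEFunction_prod_iff
    {A B : Type*}
    [NonUnitalCommRing A] [Module ℂ A] [SMulCommClass ℂ A A] [IsScalarTower ℂ A A]
    [UniformSpace A] [IsUniformAddGroup A]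
    [NonUnitalCommRing B] [Module ℂ B] [SMulCommClass ℂ B B] [IsScalarTower ℂ B B]
    [UniformSpace B] [IsUniformAddGroup B]
    (hA : IsFrechetAlgebra A) (hB : IsFrechetAlgebra B)
    (σ : characterSpace ℂ (A × B) → ℂ) :
    IsBSEFunction σ ↔
      IsBSEFunction (fun φ : characterSpace ℂ A => σ (charFst φ)) ∧
      IsBSEFunction (fun ψ : characterSpace ℂ B => σ (charSnd ψ)) :=
  isBSEFunction_prod_iff_general σ
end

section
/- Let A be a commutative topological ℂ-algebra and I a closed ideal of A, regarded as a commutative topological ℂ-algebra with the subspace topology. Then the restriction map φ ↦ φ|_I is a bijection from the set {φ ∈ Δ(A) : φ|_I ≠ 0} onto Δ(I). -/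
/-!
A character `φ` of `A` that does not vanish on `I` restricts to a character of `I`, and is
determined by that restriction: if `φ u ≠ 0` with `u ∈ I`, then `φ a * φ u = φ (a * u)` and
`a * u ∈ I`. Conversely a character `χ` of `I` takes the value `1` at some `u ∈ I`, and
`a ↦ χ (a * u)` is a character of `A` extending `χ`; it is multiplicative because
`χ (a * b * u) = χ (a * b * u * u) = χ (a * u) * χ (b * u)`.
-/

open WeakDual

namespace WeakDual.CharacterSpace

theorem exists_apply_eq_one {𝕜 B : Type*} [Semifield 𝕜] [TopologicalSpace 𝕜] [ContinuousAdd 𝕜]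
    [ContinuousConstSMul 𝕜 𝕜] [NonUnitalNonAssocSemiring B] [TopologicalSpace B] [Module 𝕜 B]
    (χ : characterSpace 𝕜 B) : ∃ u, χ u = 1 := by
  obtain ⟨x, hx⟩ : ∃ x, χ x ≠ 0 := by
    by_contra! h
    exact χ.2.1 (ContinuousLinearMap.ext h)
  exact ⟨(χ x)⁻¹ • x, by rw [map_smul, smul_eq_mul, inv_mul_cancel₀ hx]⟩

section Ideal

variable {𝕜 A : Type*} [CommSemiring 𝕜] [TopologicalSpace 𝕜] [ContinuousAdd 𝕜]
  [ContinuousConstSMul 𝕜 𝕜] [CommSemiring A] [Algebra 𝕜 A] [TopologicalSpace A] {I : Ideal A}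

noncomputable def restrictIdeal (φ : characterSpace 𝕜 A) (hφ : ∃ x : I, φ x ≠ 0) :
    characterSpace 𝕜 I :=
  ⟨(toCLM φ).comp (I.restrictScalars 𝕜).subtypeL,
    fun h => hφ.elim fun x hx => hx (DFunLike.congr_fun h x),
    fun x y => map_mul φ (x : A) y⟩

theorem restrictIdeal_apply (φ : characterSpace 𝕜 A) (hφ : ∃ x : I, φ x ≠ 0) (x : I) :
    restrictIdeal φ hφ x = φ x :=
  rfl

theorem eq_of_eqOn_ideal [IsCancelMulZero 𝕜] {φ ψ : characterSpace 𝕜 A}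
    (hφ : ∃ x : I, φ x ≠ 0) (h : ∀ x : I, φ x = ψ x) : φ = ψ := by
  obtain ⟨u, hu⟩ := hφ
  ext a
  refine mul_right_cancel₀ hu ?_
  calc φ a * φ u = φ (a * u) := (map_mul φ a u).symm
    _ = ψ (a * u) := h ⟨a * u, I.mul_mem_left a u.2⟩
    _ = ψ a * φ u := by rw [map_mul, h u]

variable [Nontrivial 𝕜] [ContinuousMul A]

noncomputable def extendOfIdeal (χ : characterSpace 𝕜 I) (u : I) (hu : χ u = 1) :
    characterSpace 𝕜 A :=
  ⟨⟨{ toFun := fun a => χ ⟨a * u, I.mul_mem_left a u.2⟩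
      map_add' := fun a b => by simp only [add_mul, ← map_add]; rfl
      map_smul' := fun c a => by simp only [smul_mul_assoc, ← map_smul]; rfl },
    (map_continuous χ).comp ((continuous_mul_const (u : A)).subtype_mk _)⟩,
    fun h => by
      have h1 : χ ⟨1 * u, I.mul_mem_left 1 u.2⟩ = 0 := DFunLike.congr_fun h 1
      simp only [one_mul, Subtype.coe_eta, hu, one_ne_zero] at h1,
    fun a b => by
      change χ ⟨a * b * u, _⟩ = χ ⟨a * u, _⟩ * χ ⟨b * u, _⟩
      rw [← map_mul, ← mul_one (χ ⟨a * b * u, _⟩), ← hu, ← map_mul]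
      congr 1
      ext
      change a * b * u * u = a * u * (b * u)
      ring⟩

theorem extendOfIdeal_apply (χ : characterSpace 𝕜 I) (u : I) (hu : χ u = 1) (a : A) :
    extendOfIdeal χ u hu a = χ ⟨a * u, I.mul_mem_left a u.2⟩ :=
  rfl

theorem extendOfIdeal_apply_coe (χ : characterSpace 𝕜 I) (u : I) (hu : χ u = 1) (x : I) :
    extendOfIdeal χ u hu x = χ x := by
  rw [extendOfIdeal_apply]
  exact (map_mul χ x u).trans (by rw [hu, mul_one])

end Ideal

end WeakDual.CharacterSpace

open CharacterSpace in
theorem characterSpace_ideal_restriction_bijection_general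
    {A : Type*} [CommRing A] [Algebra ℂ A] [TopologicalSpace A] [IsTopologicalRing A]
    (I : Ideal A) :
    (∀ φ : characterSpace ℂ A, (∃ x : ↥I, φ (x : A) ≠ 0) →
        ∃! χ : characterSpace ℂ ↥I, ∀ x : ↥I, χ x = φ (x : A)) ∧
    (∀ χ : characterSpace ℂ ↥I,
        ∃! φ : characterSpace ℂ A,
          (∃ x : ↥I, φ (x : A) ≠ 0) ∧ ∀ x : ↥I, χ x = φ (x : A)) := by
  refine ⟨fun φ hφ => ⟨restrictIdeal φ hφ, restrictIdeal_apply φ hφ, fun χ hχ => ext hχ⟩,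
    fun χ => ?_⟩
  obtain ⟨u, hu⟩ := exists_apply_eq_one χ
  have hext (x : I) : χ x = extendOfIdeal χ u hu x := (extendOfIdeal_apply_coe χ u hu x).symm
  refine ⟨extendOfIdeal χ u hu, ⟨⟨u, by rw [← hext, hu]; exact one_ne_zero⟩, hext⟩, ?_⟩
  rintro ψ ⟨hψ, hψχ⟩
  exact eq_of_eqOn_ideal hψ fun x => (hψχ x).symm.trans (hext x)

/-- Let `A` be a commutative topological `ℂ`-algebra and `I` a closed ideal of
`A`, regarded as a commutative topological `ℂ`-algebra with the subspace topology.  Then the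
restriction map `φ ↦ φ|_I` is a bijection from `{φ ∈ Δ(A) : φ|_I ≠ 0}` onto `Δ(I)`. -/
theorem characterSpace_ideal_restriction_bijection
    {A : Type*} [CommRing A] [Algebra ℂ A] [TopologicalSpace A] [IsTopologicalRing A]
    [ContinuousSMul ℂ A]
    (I : Ideal A) (hIc : IsClosed (I : Set A)) :
    (∀ φ : characterSpace ℂ A, (∃ x : ↥I, φ (x : A) ≠ 0) →
        ∃! χ : characterSpace ℂ ↥I, ∀ x : ↥I, χ x = φ (x : A)) ∧
    (∀ χ : characterSpace ℂ ↥I,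
        ∃! φ : characterSpace ℂ A,
          (∃ x : ↥I, φ (x : A) ≠ 0) ∧ ∀ x : ↥I, χ x = φ (x : A)) :=
  characterSpace_ideal_restriction_bijection_general I
end

section
/- Let A be a commutative Fréchet algebra whose character space Δ(A) is discrete, and let I be a closed ideal of A, regarded as a commutative topological ℂ-algebra with the subspace topology. Let w be a BSE-function on Δ(I), and define σ : Δ(A) → ℂ by σ(φ) = w(φ|_I) if φ|_I ≠ 0 (in which case φ|_I ∈ Δ(I)) and σ(φ) = 0 if φ|_I = 0. Then σ is a BSE-function on Δ(A). -/
open WeakDual Filter Topology Bornology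

/-
Characters of `A` vanishing on `I` contribute nothing to either side of the BSE inequality, and
the others restrict to characters of `I`. So a BSE inequality for `w`, with constant `β` and bounded
set `M ⊆ I`, becomes term by term one for `σ`, with the same `β` and `M` regarded as a (still
bounded) subset of `A`.
-/

-- Over `ℝ`, `⨆` of an unbounded family is the junk value `0`; nonnegativity makes it harmless.
lemma Real.biSup_image_of_nonneg {ι ι' : Type*} {s : Set ι} {f : ι → ι'} {g : ι' → ℝ}
    (hg : ∀ y, 0 ≤ g y) : ⨆ y ∈ f '' s, g y = ⨆ x ∈ s, g (f x) := by
  by_cases hb : BddAbove (Set.range fun x : s ↦ g (f x))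
  · exact ciSup_image hb (by simpa using Real.iSup_nonneg fun x : s ↦ hg (f x))
  · have hb' : ¬BddAbove (Set.range fun y : f '' s ↦ g y) := by
      simpa [bddAbove_def] using hb
    rw [cbiSup_of_not_bddAbove hb', cbiSup_of_not_bddAbove hb]

namespace WeakDual.CharacterSpace

variable {𝕜 A : Type*} [CommRing 𝕜] [TopologicalSpace 𝕜] [ContinuousAdd 𝕜]
  [ContinuousConstSMul 𝕜 𝕜] [CommRing A] [Algebra 𝕜 A] [TopologicalSpace A]

noncomputable def restrict (I : Ideal A) (φ : characterSpace 𝕜 A)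
    (hφ : ¬∀ x : I, φ x = 0) : characterSpace 𝕜 I :=
  ⟨(toCLM φ).comp ⟨(I.restrictScalars 𝕜).subtype, continuous_subtype_val⟩,
    fun h ↦ hφ fun x ↦ DFunLike.congr_fun h x, fun x y ↦ map_mul φ (x : A) y⟩

end WeakDual.CharacterSpace

open WeakDual.CharacterSpace

section ExtensionByRestriction

variable {A : Type*} [CommRing A] [Algebra ℂ A] [TopologicalSpace A] {I : Ideal A}
  {w : characterSpace ℂ I → ℂ} {σ : characterSpace ℂ A → ℂ}
  (hσ0 : ∀ φ : characterSpace ℂ A, (∀ x : I, φ x = 0) → σ φ = 0)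
  (hσ : ∀ φ (hφ : ¬∀ x : I, φ x = 0), σ φ = w (restrict I φ hφ))
include hσ0 hσ

lemma norm_le_max_of_restrict {C : ℝ} (hC : ∀ χ, ‖w χ‖ ≤ C) (φ : characterSpace ℂ A) :
    ‖σ φ‖ ≤ max C 0 := by
  by_cases hφ : ∀ x : I, φ x = 0
  · simp [hσ0 φ hφ]
  · exact (hσ φ hφ ▸ hC _).trans (le_max_left C 0)

lemma exists_mul_eq_mul_restrict (χ₀ : characterSpace ℂ I) (c : ℂ) (φ : characterSpace ℂ A) :
    ∃ (c' : ℂ) (χ : characterSpace ℂ I), c * σ φ = c' * w χ ∧ ∀ x : I, c * φ x = c' * χ x := by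
  by_cases hφ : ∀ x : I, φ x = 0
  · exact ⟨0, χ₀, by simp [hσ0 φ hφ], fun x ↦ by simp [hφ x]⟩
  · exact ⟨c, restrict I φ hφ, by rw [hσ φ hφ], fun x ↦ rfl⟩

lemma norm_sum_mul_le_of_restrict {M : Set I} {β : ℝ} (hβ : 0 ≤ β)
    (hw : ∀ (n : ℕ) (c : Fin n → ℂ) (χ : Fin n → characterSpace ℂ I),
      ‖∑ i, c i * w (χ i)‖ ≤ β * ⨆ x ∈ M, ‖∑ i, c i * χ i x‖)
    (n : ℕ) (c : Fin n → ℂ) (φ : Fin n → characterSpace ℂ A) :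
    ‖∑ i, c i * σ (φ i)‖ ≤ β * ⨆ a ∈ Subtype.val '' M, ‖∑ i, c i * φ i a‖ := by
  rcases isEmpty_or_nonempty (characterSpace ℂ I) with hI | ⟨⟨χ₀⟩⟩
  · have hσφ (i : Fin n) : σ (φ i) = 0 := hσ0 _ (not_not.mp fun h ↦ hI.false (restrict I _ h))
    simpa [hσφ] using mul_nonneg hβ (Real.iSup_nonneg fun a ↦ Real.iSup_nonneg fun _ ↦
      norm_nonneg (∑ i, c i * φ i a))
  choose c' χ hc'χ using fun i ↦ exists_mul_eq_mul_restrict hσ0 hσ χ₀ (c i) (φ i)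
  calc ‖∑ i, c i * σ (φ i)‖ = ‖∑ i, c' i * w (χ i)‖ := by simp only [(hc'χ _).1]
    _ ≤ β * ⨆ x ∈ M, ‖∑ i, c' i * χ i x‖ := hw n c' χ
    _ = β * ⨆ a ∈ Subtype.val '' M, ‖∑ i, c i * φ i a‖ := by
      rw [Real.biSup_image_of_nonneg fun _ ↦ norm_nonneg _]
      simp only [(hc'χ _).2]

theorem isBSEFunction_of_restrict (hcont : Continuous σ) (hw : IsBSEFunction w) :
    IsBSEFunction σ := by
  obtain ⟨-, ⟨C, hC⟩, M, β, hβ, hM, hwM⟩ := hw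
  exact ⟨hcont, ⟨max C 0, norm_le_max_of_restrict hσ0 hσ hC⟩, Subtype.val '' M, β, hβ,
    hM.image ⟨(I.restrictScalars ℂ).subtype, continuous_subtype_val⟩,
    norm_sum_mul_le_of_restrict hσ0 hσ hβ hwM⟩

end ExtensionByRestriction

theorem extension_of_BSE_function_of_ideal_general
    {A : Type*} [CommRing A] [Algebra ℂ A] [UniformSpace A]
    (hdisc : DiscreteTopology (characterSpace ℂ A))
    (I : Ideal A)
    (w : characterSpace ℂ ↥I → ℂ) (hw : IsBSEFunction w)
    (σ : characterSpace ℂ A → ℂ)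
    (hσ0 : ∀ φ : characterSpace ℂ A, (∀ x : ↥I, φ (x : A) = 0) → σ φ = 0)
    (hσw : ∀ (φ : characterSpace ℂ A) (χ : characterSpace ℂ ↥I),
        (∀ x : ↥I, χ x = φ (x : A)) → σ φ = w χ) :
    IsBSEFunction σ :=
  isBSEFunction_of_restrict hσ0 (fun φ hφ ↦ hσw φ (restrict I φ hφ) fun _ ↦ rfl)
    continuous_of_discreteTopology hw

/-- Let `A` be a commutative Fréchet algebra with discrete character space and
`I` a closed ideal of `A` (with the subspace topology).  Let `w` be a BSE-function on `Δ(I)` and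
define `σ : Δ(A) → ℂ` by `σ(φ) = w(φ|_I)` if `φ|_I ≠ 0` (in which case `φ|_I ∈ Δ(I)`) and
`σ(φ) = 0` if `φ|_I = 0`.  Then `σ` is a BSE-function on `Δ(A)`. -/
theorem extension_of_BSE_function_of_ideal
    {A : Type*} [CommRing A] [Algebra ℂ A] [UniformSpace A] [IsUniformAddGroup A]
    (hA : IsFrechetAlgebra A) (hdisc : DiscreteTopology (characterSpace ℂ A))
    (I : Ideal A) (hIc : IsClosed (I : Set A))
    (w : characterSpace ℂ ↥I → ℂ) (hw : IsBSEFunction w)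
    (σ : characterSpace ℂ A → ℂ)
    (hσ0 : ∀ φ : characterSpace ℂ A, (∀ x : ↥I, φ (x : A) = 0) → σ φ = 0)
    (hσw : ∀ (φ : characterSpace ℂ A) (χ : characterSpace ℂ ↥I),
        (∀ x : ↥I, χ x = φ (x : A)) → σ φ = w χ) :
    IsBSEFunction σ :=
  extension_of_BSE_function_of_ideal_general hdisc I w hw σ hσ0 hσw
end

section
/- Let A be a commutative semisimple Fréchet algebra that is a BSE-algebra and whose character space Δ(A) is discrete, and let I be an essential closed ideal of A, regarded as a commutative topological ℂ-algebra with the subspace topology. If I is semisimple and has a bounded Δ-weak approximate identity, then I is a BSE-algebra. -/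
/-!
Since `A` is unital, right multiplication by `a` is a multiplier of `A` whose symbol is the
Gelfand transform `ψ ↦ ψ a`; the BSE property therefore makes every Gelfand transform bounded, and
Banach–Steinhaus (a Fréchet space is barrelled) makes the characters of `A` uniformly bounded on
bounded sets. A character `φ` of `I` extends to `A` by `a ↦ φ (a x) / φ x` for any `x` with
`φ x ≠ 0`, continuously in `φ`, so `Δ(I)` inherits both discreteness and the uniform bound.

The symbol of a multiplier `T` of `I` is the pointwise limit of `φ (T e_α)`, which yields the BSE
estimate with `M = {T e_α}`. Conversely, a BSE-function on `Δ(I)`, pulled back along restriction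
and extended by zero, is a BSE-function on `Δ(A)`; it is therefore the symbol of right
multiplication by some `u ∈ A`, which maps `I` into itself.
-/

open WeakDual Filter Topology Bornology

/-- A *multiplier* of `A` is a continuous linear map `T : A → A` with `T (a*b) = a * T b`. -/
def IsMultiplier {A : Type*} [NonUnitalCommRing A] [Module ℂ A] [TopologicalSpace A]
    (T : A →L[ℂ] A) : Prop :=
  ∀ a b : A, T (a * b) = a * T b

/-- A commutative topological `ℂ`-algebra is *semisimple* if the intersection of the kernels of
all its characters is `{0}`. -/
def IsSemisimple (A : Type*) [NonUnitalCommRing A] [Module ℂ A] [TopologicalSpace A] : Prop :=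
  ∀ a : A, (∀ φ : characterSpace ℂ A, φ a = 0) → a = 0

/-- A commutative (semisimple) topological `ℂ`-algebra `A` is a *BSE-algebra* if every
multiplier of `A` has a BSE-function as Gelfand transform, and conversely every BSE-function on
`Δ(A)` arises in this way from a multiplier of `A`. -/
def IsBSEAlgebra (A : Type*) [NonUnitalCommRing A] [Module ℂ A] [TopologicalSpace A] : Prop :=
  (∀ T : A →L[ℂ] A, IsMultiplier T →
      ∃ σ : characterSpace ℂ A → ℂ, IsBSEFunction σ ∧
        ∀ (φ : characterSpace ℂ A) (a : A), φ (T a) = σ φ * φ a) ∧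
  (∀ σ : characterSpace ℂ A → ℂ, IsBSEFunction σ →
      ∃ T : A →L[ℂ] A, IsMultiplier T ∧
        ∀ (φ : characterSpace ℂ A) (a : A), φ (T a) = σ φ * φ a)

/-- A closed ideal `I` of `A` is *essential* if `I` equals the closed linear span of
`{a * x : a ∈ A, x ∈ I}`. -/
def IsEssentialIdeal {A : Type*} [CommRing A] [Algebra ℂ A] [TopologicalSpace A]
    (I : Ideal A) : Prop :=
  (I : Set A) =
    closure (Submodule.span ℂ {z : A | ∃ (a : A) (x : A), x ∈ I ∧ z = a * x} : Set A)

/-- A net `(e_α)_{α ∈ Λ}` in a commutative topological `ℂ`-algebra `A`, indexed by a (directed)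
preorder `Λ`, is a *bounded Δ-weak approximate identity* if its range is von Neumann bounded and
`φ(e_α) → 1` for every character `φ ∈ Δ(A)`. -/
def IsBoundedDeltaWeakApproximateIdentity {A : Type*} [NonUnitalCommRing A] [Module ℂ A]
    [TopologicalSpace A] {Λ : Type*} [Preorder Λ] (e : Λ → A) : Prop :=
  Bornology.IsVonNBounded ℂ (Set.range e) ∧
    ∀ φ : characterSpace ℂ A, Tendsto (fun α => φ (e α)) atTop (nhds (1 : ℂ))

open scoped Uniformity Pointwise

namespace IsFrechetAlgebra

variable {A : Type*} [NonUnitalCommRing A] [Module ℂ A] [UniformSpace A]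

theorem continuousSMul (hA : IsFrechetAlgebra A) : ContinuousSMul ℂ A :=
  hA.choose_spec.1.continuousSMul

theorem barrelledSpace [IsUniformAddGroup A] (hA : IsFrechetAlgebra A) : BarrelledSpace ℂ A := by
  obtain ⟨p, hp, -, -, hcomplete⟩ := hA
  have : ContinuousSMul ℂ A := hp.continuousSMul
  have : (𝓝 (0 : A)).IsCountablyGenerated := by
    rw [(SeminormFamily.withSeminorms_iff_nhds_eq_iInf _).mp hp]
    exact Filter.iInf.isCountablyGenerated _
  have : (𝓤 A).IsCountablyGenerated := IsUniformAddGroup.uniformity_countably_generated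
  infer_instance

theorem continuous_mul_right [IsScalarTower ℂ A A] (hA : IsFrechetAlgebra A) (c : A) :
    Continuous fun a : A => a * c := by
  obtain ⟨p, hp, -, hsub, -⟩ := hA
  have : IsTopologicalAddGroup A := hp.topologicalAddGroup
  refine WithSeminorms.continuous_of_isBounded hp hp (LinearMap.mulRight ℂ c)
    fun i => ⟨{i}, (p i c).toNNReal, fun a => ?_⟩
  simpa [NNReal.smul_def, mul_comm (p i c)] using hsub i a c

end IsFrechetAlgebra

theorem exists_bound_of_isVonNBounded_of_forall_bounded {E ι : Type*} [AddCommGroup E]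
    [Module ℂ E] [UniformSpace E] [IsUniformAddGroup E] [ContinuousSMul ℂ E] [BarrelledSpace ℂ E]
    {f : ι → E →L[ℂ] ℂ} (hf : ∀ x, ∃ C, ∀ i, ‖f i x‖ ≤ C) {N : Set E}
    (hN : IsVonNBounded ℂ N) : ∃ C, ∀ i, ∀ x ∈ N, ‖f i x‖ ≤ C := by
  have hequi : UniformEquicontinuous ((↑) ∘ f) := by
    refine (norm_withSeminorms ℂ ℂ).banach_steinhaus fun _ x => ?_
    obtain ⟨C, hC⟩ := hf x
    exact ⟨C, by rintro _ ⟨i, rfl⟩; simpa using hC i⟩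
  obtain ⟨U, hU, hU1⟩ := eventually_iff_exists_mem.mp <|
    hequi.equicontinuous 0 _ (Metric.dist_mem_uniformity one_pos)
  obtain ⟨c, hNc, -⟩ : ∃ c : ℂ, N ⊆ c • U ∧ 1 ≤ ‖c‖ :=
    ((hN hU).and (tendsto_norm_cobounded_atTop.eventually (eventually_ge_atTop 1))).exists
  refine ⟨‖c‖, fun i x hx => ?_⟩
  obtain ⟨u, hu, rfl⟩ := hNc hx
  have : ‖f i u‖ < 1 := by simpa using hU1 u hu i
  rw [map_smul, norm_smul]
  exact mul_le_of_le_one_right (norm_nonneg c) this.le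

theorem le_biSup_of_bddAbove {ι : Type*} {f : ι → ℝ} {s : Set ι} (hf : BddAbove (f '' s))
    {i : ι} (hi : i ∈ s) : f i ≤ ⨆ j ∈ s, f j :=
  le_ciSup₂ (f := fun j (_ : j ∈ s) => f j)
    (hf.mono (Set.iUnion_subset fun _ => Set.range_subset_iff.2 (Set.mem_image_of_mem f))) i hi

theorem biSup_comp_le_biSup_image {α β : Type*} {f : β → ℝ} (hf : ∀ b, 0 ≤ f b) (g : α → β)
    {s : Set α} (hbdd : BddAbove (f '' (g '' s))) : ⨆ x ∈ s, f (g x) ≤ ⨆ b ∈ g '' s, f b :=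
  Real.iSup_le (fun _ => Real.iSup_le
      (fun hx => le_biSup_of_bddAbove hbdd (Set.mem_image_of_mem g hx))
      (Real.iSup_nonneg fun b => Real.iSup_nonneg fun _ => hf b))
    (Real.iSup_nonneg fun b => Real.iSup_nonneg fun _ => hf b)

namespace WeakDual.CharacterSpace

variable {B : Type*} [NonUnitalCommRing B] [Module ℂ B] [TopologicalSpace B]

theorem exists_apply_ne_zero (φ : characterSpace ℂ B) : ∃ x, φ x ≠ 0 := by
  by_contra! h
  exact φ.2.1 (ContinuousLinearMap.ext h)

theorem bddAbove_norm_sum_image {n : ℕ} (c : Fin n → ℂ) (φ : Fin n → characterSpace ℂ B)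
    {M : Set B} (hM : IsVonNBounded ℂ M) :
    BddAbove ((fun a => ‖∑ i, c i * φ i a‖) '' M) := by
  obtain ⟨r, hr⟩ := (NormedSpace.isVonNBounded_iff' ℂ).mp
    (hM.image (∑ i, c i • toCLM (φ i)))
  refine ⟨r, ?_⟩
  rintro _ ⟨a, ha, rfl⟩
  simpa using hr _ (Set.mem_image_of_mem _ ha)

end WeakDual.CharacterSpace

section BSEFunction

variable {B : Type*} [NonUnitalCommRing B] [Module ℂ B] [TopologicalSpace B]

theorem IsMultiplier.exists_symbol {T : B →L[ℂ] B} (hT : IsMultiplier T) :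
    ∃ σ : characterSpace ℂ B → ℂ, ∀ φ x, φ (T x) = σ φ * φ x := by
  choose x₀ hx₀ using CharacterSpace.exists_apply_ne_zero (B := B)
  refine ⟨fun φ => φ (T (x₀ φ)) / φ (x₀ φ), fun φ x => ?_⟩
  have : φ (x₀ φ) * φ (T x) = φ x * φ (T (x₀ φ)) := by
    rw [← map_mul, ← map_mul, ← hT, ← hT, mul_comm]
  field_simp [hx₀ φ]
  linear_combination this

theorem IsBoundedDeltaWeakApproximateIdentity.tendsto_symbol {Λ : Type*} [Preorder Λ]
    {e : Λ → B} (he : IsBoundedDeltaWeakApproximateIdentity e) {T : B →L[ℂ] B}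
    {σ : characterSpace ℂ B → ℂ} (hσ : ∀ φ x, φ (T x) = σ φ * φ x) (φ : characterSpace ℂ B) :
    Tendsto (fun α => φ (T (e α))) atTop (𝓝 (σ φ)) := by
  simpa [hσ] using (he.2 φ).const_mul (σ φ)

theorem isBSEFunction_of_tendsto [DiscreteTopology (characterSpace ℂ B)] {Λ : Type*} [Preorder Λ]
    [(atTop : Filter Λ).NeBot] {m : Λ → B} (hm : IsVonNBounded ℂ (Set.range m)) {C : ℝ}
    (hC : ∀ φ : characterSpace ℂ B, ∀ α, ‖φ (m α)‖ ≤ C) {σ : characterSpace ℂ B → ℂ}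
    (hσ : ∀ φ, Tendsto (fun α => φ (m α)) atTop (𝓝 (σ φ))) : IsBSEFunction σ := by
  refine ⟨continuous_of_discreteTopology,
    ⟨C, fun φ => le_of_tendsto (hσ φ).norm (Eventually.of_forall (hC φ))⟩,
    Set.range m, 1, zero_le_one, hm, fun n c φ => ?_⟩
  have hlim : Tendsto (fun α => ‖∑ i, c i * φ i (m α)‖) atTop (𝓝 ‖∑ i, c i * σ (φ i)‖) :=
    (tendsto_finsetSum _ fun i _ => (hσ (φ i)).const_mul (c i)).norm
  rw [one_mul]
  exact le_of_tendsto hlim <| Eventually.of_forall fun α =>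
    le_biSup_of_bddAbove (CharacterSpace.bddAbove_norm_sum_image c φ hm) ⟨α, rfl⟩

theorem IsMultiplier.exists_isBSEFunction [DiscreteTopology (characterSpace ℂ B)] {Λ : Type*}
    [Preorder Λ] [(atTop : Filter Λ).NeBot] {e : Λ → B}
    (he : IsBoundedDeltaWeakApproximateIdentity e)
    (hbound : ∀ N : Set B, IsVonNBounded ℂ N → ∃ C, ∀ φ : characterSpace ℂ B, ∀ x ∈ N, ‖φ x‖ ≤ C)
    {T : B →L[ℂ] B} (hT : IsMultiplier T) :
    ∃ σ, IsBSEFunction σ ∧ ∀ (φ : characterSpace ℂ B) x, φ (T x) = σ φ * φ x := by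
  obtain ⟨σ, hσ⟩ := hT.exists_symbol
  have hTe : IsVonNBounded ℂ (Set.range (T ∘ e)) := by
    simpa only [Set.range_comp] using he.1.image T
  obtain ⟨C, hC⟩ := hbound _ hTe
  exact ⟨σ, isBSEFunction_of_tendsto hTe (fun φ α => hC φ _ ⟨α, rfl⟩)
    (he.tendsto_symbol hσ), hσ⟩

end BSEFunction

theorem IsBSEAlgebra.exists_bound_apply {A : Type*} [CommRing A] [Algebra ℂ A]
    [TopologicalSpace A] (hBSE : IsBSEAlgebra A) (hmul : ∀ c : A, Continuous fun a : A => a * c)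
    (a : A) : ∃ C, ∀ ψ : characterSpace ℂ A, ‖ψ a‖ ≤ C := by
  obtain ⟨σ, ⟨-, ⟨C, hC⟩, -⟩, hσ⟩ :=
    hBSE.1 ⟨LinearMap.mulRight ℂ a, hmul a⟩ fun x y => mul_assoc x y a
  refine ⟨C, fun ψ => ?_⟩
  have h : ψ a = σ ψ := by simpa [← ContinuousLinearMap.coe_coe] using hσ ψ 1
  exact h ▸ hC ψ

theorem IsBSEAlgebra.exists_bound_of_isVonNBounded {A : Type*} [CommRing A] [Algebra ℂ A]
    [UniformSpace A] [IsUniformAddGroup A] (hA : IsFrechetAlgebra A) (hBSE : IsBSEAlgebra A)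
    {N : Set A} (hN : IsVonNBounded ℂ N) :
    ∃ C, ∀ ψ : characterSpace ℂ A, ∀ a ∈ N, ‖ψ a‖ ≤ C :=
  have := hA.continuousSMul
  have := hA.barrelledSpace
  exists_bound_of_isVonNBounded_of_forall_bounded (f := CharacterSpace.toCLM)
    (hBSE.exists_bound_apply hA.continuous_mul_right) hN

namespace Ideal

variable {A : Type*} [CommRing A] [Algebra ℂ A] [TopologicalSpace A] (I : Ideal A)

noncomputable def restrictCharacter (ψ : characterSpace ℂ A) (h : ∃ y : I, ψ y ≠ 0) :
    characterSpace ℂ I :=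
  ⟨(CharacterSpace.toCLM ψ).comp (I.restrictScalars ℂ).subtypeL,
    fun h0 => h.elim fun y hy => hy (DFunLike.congr_fun h0 y),
    fun x y => map_mul ψ (x : A) y⟩

@[simp]
theorem restrictCharacter_apply (ψ : characterSpace ℂ A) (h : ∃ y : I, ψ y ≠ 0) (y : I) :
    I.restrictCharacter ψ h y = ψ y :=
  rfl

def mulRightCLM (hmul : ∀ c : A, Continuous fun a : A => a * c) (x : I) : A →L[ℂ] I where
  toFun a := ⟨a * x, I.mul_mem_left a x.2⟩
  map_add' a b := Subtype.ext (add_mul a b x)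
  map_smul' r a := Subtype.ext (smul_mul_assoc r a x)
  cont := (hmul x).subtype_mk _

theorem apply_mul_mul_apply (φ : characterSpace ℂ I) (x : I) (a b : A) :
    φ ⟨a * x, I.mul_mem_left a x.2⟩ * φ ⟨b * x, I.mul_mem_left b x.2⟩ =
      φ ⟨a * b * x, I.mul_mem_left _ x.2⟩ * φ x := by
  rw [← map_mul, ← map_mul]
  congr 1
  ext
  simp only [MulMemClass.coe_mul]
  ring

noncomputable def extendCharacter (hmul : ∀ c : A, Continuous fun a : A => a * c) (x : I)
    (φ : {φ : characterSpace ℂ I // φ x ≠ 0}) : characterSpace ℂ A :=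
  ⟨(φ.1 x)⁻¹ • (CharacterSpace.toCLM φ.1).comp (I.mulRightCLM hmul x),
    fun h0 => φ.2 <| by
      have h : (φ.1 x)⁻¹ * φ.1 (x * x) = 0 := DFunLike.congr_fun h0 (x : A)
      rwa [map_mul, inv_mul_cancel_left₀ φ.2] at h,
    fun a b => by
      change (φ.1 x)⁻¹ * φ.1 ⟨a * b * x, _⟩ =
        (φ.1 x)⁻¹ * φ.1 ⟨a * x, _⟩ * ((φ.1 x)⁻¹ * φ.1 ⟨b * x, _⟩)
      have := I.apply_mul_mul_apply φ.1 x a b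
      field_simp [φ.2]
      linear_combination this.symm⟩

theorem extendCharacter_apply (hmul : ∀ c : A, Continuous fun a : A => a * c) (x : I)
    (φ : {φ : characterSpace ℂ I // φ x ≠ 0}) (a : A) :
    I.extendCharacter hmul x φ a = φ.1 ⟨a * x, I.mul_mem_left a x.2⟩ / φ.1 x :=
  inv_mul_eq_div _ _

theorem extendCharacter_apply_coe (hmul : ∀ c : A, Continuous fun a : A => a * c) (x : I)
    (φ : {φ : characterSpace ℂ I // φ x ≠ 0}) (y : I) :
    I.extendCharacter hmul x φ y = φ.1 y := by
  rw [extendCharacter_apply, show (⟨y * x, _⟩ : I) = y * x from rfl, map_mul, mul_div_assoc,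
    div_self φ.2, mul_one]

variable {I}

theorem isVonNBounded_image_val {N : Set I} (hN : IsVonNBounded ℂ N) :
    IsVonNBounded ℂ ((↑) '' N : Set A) :=
  hN.image (I.restrictScalars ℂ).subtypeL

theorem continuous_extendCharacter (hmul : ∀ c : A, Continuous fun a : A => a * c) (x : I) :
    Continuous (I.extendCharacter hmul x) := by
  have hev : ∀ y : I, Continuous fun φ : {φ : characterSpace ℂ I // φ x ≠ 0} => φ.1 y :=
    fun y => ((WeakDual.eval_continuous y).comp continuous_subtype_val).comp continuous_subtype_val
  refine (WeakDual.continuous_of_continuous_eval fun a => ?_).subtype_mk _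
  exact ((hev _).div (hev x) fun φ => φ.2).congr fun φ => (I.extendCharacter_apply hmul x φ a).symm

theorem exists_character_extension (hmul : ∀ c : A, Continuous fun a : A => a * c)
    (φ : characterSpace ℂ I) : ∃ ψ : characterSpace ℂ A, ∀ y : I, ψ y = φ y :=
  have ⟨x, hx⟩ := CharacterSpace.exists_apply_ne_zero φ
  ⟨I.extendCharacter hmul x ⟨φ, hx⟩, I.extendCharacter_apply_coe hmul x ⟨φ, hx⟩⟩

theorem discreteTopology_characterSpace [DiscreteTopology (characterSpace ℂ A)]
    (hmul : ∀ c : A, Continuous fun a : A => a * c) : DiscreteTopology (characterSpace ℂ I) := by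
  refine discreteTopology_iff_isOpen_singleton.mpr fun φ => ?_
  obtain ⟨x, hx⟩ := CharacterSpace.exists_apply_ne_zero φ
  have hD : IsOpen {φ : characterSpace ℂ I | φ x ≠ 0} :=
    isOpen_ne_fun ((WeakDual.eval_continuous x).comp continuous_subtype_val) continuous_const
  have : DiscreteTopology {φ : characterSpace ℂ I | φ x ≠ 0} :=
    .of_continuous_injective (continuous_extendCharacter hmul x) fun φ₁ φ₂ h =>
      Subtype.ext <| CharacterSpace.ext fun y => by
        rw [← I.extendCharacter_apply_coe hmul x φ₁ y, h, I.extendCharacter_apply_coe]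
  simpa using hD.isOpenMap_subtype_val _ (isOpen_discrete {⟨φ, hx⟩})

variable (I)

noncomputable def extendByZero (σ : characterSpace ℂ I → ℂ) (ψ : characterSpace ℂ A) : ℂ :=
  open Classical in
  if h : ∃ y : I, ψ y ≠ 0 then σ (I.restrictCharacter ψ h) else 0

theorem extendByZero_of_forall_apply_eq (σ : characterSpace ℂ I → ℂ) {ψ : characterSpace ℂ A}
    {φ : characterSpace ℂ I} (hψ : ∀ y : I, ψ y = φ y) : I.extendByZero σ ψ = σ φ := by
  have h : ∃ y : I, ψ y ≠ 0 := by simpa only [hψ] using CharacterSpace.exists_apply_ne_zero φ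
  rw [extendByZero, dif_pos h]
  exact congrArg σ (CharacterSpace.ext fun y => hψ y)

theorem exists_sum_extendByZero_eq (σ : characterSpace ℂ I → ℂ) {n : ℕ} (c : Fin n → ℂ)
    (ψ : Fin n → characterSpace ℂ A) :
    ∃ (m : ℕ) (c' : Fin m → ℂ) (φ : Fin m → characterSpace ℂ I),
      ∑ i, c i * I.extendByZero σ (ψ i) = ∑ j, c' j * σ (φ j) ∧
        ∀ y : I, ∑ j, c' j * φ j y = ∑ i, c i * ψ i y := by
  classical
  -- Drop the characters vanishing on `I`: they contribute to neither side.
  let good := {i // ∃ y : I, ψ i y ≠ 0}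
  let e := Fintype.equivFin good
  have hsum : ∀ f : Fin n → ℂ, (∀ i, (¬∃ y : I, ψ i y ≠ 0) → f i = 0) →
      ∑ i, f i = ∑ j, f (e.symm j) := by
    intro f hf
    rw [← Fintype.sum_subtype_add_sum_subtype (fun i => ∃ y : I, ψ i y ≠ 0) f,
      Fintype.sum_eq_zero (fun i : {i // ¬∃ y : I, ψ i y ≠ 0} => f i) fun i => hf i.1 i.2,
      add_zero]
    exact (e.symm.sum_comp _).symm
  refine ⟨_, fun j => c (e.symm j), fun j => I.restrictCharacter (ψ (e.symm j)) (e.symm j).2,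
    ?_, fun y => ?_⟩
  · rw [hsum]
    · exact Finset.sum_congr rfl fun j _ => congrArg (c (e.symm j) * ·)
        (I.extendByZero_of_forall_apply_eq σ fun y => rfl)
    · intro i hi
      rw [extendByZero, dif_neg hi, mul_zero]
  · refine (hsum (fun i => c i * ψ i y) fun i hi => ?_).symm
    rw [not_exists_not.mp hi y, mul_zero]

theorem isBSEFunction_extendByZero [DiscreteTopology (characterSpace ℂ A)]
    {σ : characterSpace ℂ I → ℂ} (hσ : IsBSEFunction σ) : IsBSEFunction (I.extendByZero σ) := by
  obtain ⟨-, ⟨C, hC⟩, M, β, hβ, hM, hineq⟩ := hσ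
  have hMA := isVonNBounded_image_val hM
  refine ⟨continuous_of_discreteTopology, ⟨max C 0, fun ψ => ?_⟩, _, β, hβ, hMA,
    fun n c ψ => ?_⟩
  · unfold extendByZero
    split_ifs
    · exact le_max_of_le_left (hC _)
    · simp
  obtain ⟨m, c', φ, hsum, hsum_apply⟩ := I.exists_sum_extendByZero_eq σ c ψ
  calc ‖∑ i, c i * I.extendByZero σ (ψ i)‖ = ‖∑ j, c' j * σ (φ j)‖ := by rw [hsum]
    _ ≤ β * ⨆ y ∈ M, ‖∑ j, c' j * φ j y‖ := hineq m c' φ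
    _ = β * ⨆ y ∈ M, ‖∑ i, c i * ψ i (y : A)‖ := by simp only [hsum_apply]
    _ ≤ β * ⨆ a ∈ (↑) '' M, ‖∑ i, c i * ψ i a‖ :=
        mul_le_mul_of_nonneg_left (biSup_comp_le_biSup_image (fun _ => norm_nonneg _) _
          (CharacterSpace.bddAbove_norm_sum_image c ψ hMA)) hβ

def restrictMulRightCLM (hmul : ∀ c : A, Continuous fun a : A => a * c) (u : A) : I →L[ℂ] I where
  toFun x := ⟨x * u, I.mul_mem_right u x.2⟩
  map_add' x y := Subtype.ext (add_mul (x : A) y u)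
  map_smul' r x := Subtype.ext (smul_mul_assoc r (x : A) u)
  cont := ((hmul u).comp continuous_subtype_val).subtype_mk _

theorem isMultiplier_restrictMulRightCLM (hmul : ∀ c : A, Continuous fun a : A => a * c)
    (u : A) : IsMultiplier (I.restrictMulRightCLM hmul u) :=
  fun x y => Subtype.ext (mul_assoc (x : A) y u)

theorem exists_isMultiplier_of_isBSEFunction [DiscreteTopology (characterSpace ℂ A)]
    (hmul : ∀ c : A, Continuous fun a : A => a * c) (hBSE : IsBSEAlgebra A)
    {σ : characterSpace ℂ I → ℂ} (hσ : IsBSEFunction σ) :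
    ∃ T : I →L[ℂ] I, IsMultiplier T ∧ ∀ (φ : characterSpace ℂ I) (x : I), φ (T x) = σ φ * φ x := by
  obtain ⟨S, hS, hSσ⟩ := hBSE.2 _ (I.isBSEFunction_extendByZero hσ)
  refine ⟨I.restrictMulRightCLM hmul (S 1), I.isMultiplier_restrictMulRightCLM hmul _,
    fun φ x => ?_⟩
  obtain ⟨ψ, hψ⟩ := exists_character_extension hmul φ
  have hSx : S x = x * S 1 := by rw [← hS, mul_one]
  calc φ (I.restrictMulRightCLM hmul (S 1) x) = ψ (S x) := by rw [← hψ, hSx]; rfl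
    _ = σ φ * φ x := by rw [hSσ, I.extendByZero_of_forall_apply_eq σ hψ, hψ]

end Ideal

theorem Ideal.exists_bound_characterSpace {A : Type*} [CommRing A] [Algebra ℂ A] [UniformSpace A]
    [IsUniformAddGroup A] (hA : IsFrechetAlgebra A) (hBSE : IsBSEAlgebra A) {I : Ideal A}
    {N : Set I} (hN : IsVonNBounded ℂ N) :
    ∃ C, ∀ φ : characterSpace ℂ I, ∀ x ∈ N, ‖φ x‖ ≤ C := by
  obtain ⟨C, hC⟩ := hBSE.exists_bound_of_isVonNBounded hA (isVonNBounded_image_val hN)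
  refine ⟨C, fun φ x hx => ?_⟩
  obtain ⟨ψ, hψ⟩ := exists_character_extension hA.continuous_mul_right φ
  exact hψ x ▸ hC ψ x ⟨x, hx, rfl⟩

theorem essential_ideal_isBSEAlgebra_general
    {A : Type*} [CommRing A] [Algebra ℂ A] [UniformSpace A] [IsUniformAddGroup A]
    (hA : IsFrechetAlgebra A) (hABSE : IsBSEAlgebra A)
    (hdisc : DiscreteTopology (characterSpace ℂ A))
    (I : Ideal A)
    {Λ : Type*} [Preorder Λ] [IsDirected Λ (· ≤ ·)] [Nonempty Λ]
    (e : Λ → ↥I) (he : IsBoundedDeltaWeakApproximateIdentity e) :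
    IsBSEAlgebra ↥I := by
  have hmul := hA.continuous_mul_right
  have : DiscreteTopology (characterSpace ℂ I) := I.discreteTopology_characterSpace hmul
  exact ⟨fun T hT => hT.exists_isBSEFunction he
      (fun _ hN => Ideal.exists_bound_characterSpace hA hABSE hN),
    fun σ hσ => I.exists_isMultiplier_of_isBSEFunction hmul hABSE hσ⟩

/-- Let `A` be a commutative semisimple Fréchet algebra which is a BSE-algebra
and whose character space is discrete, and let `I` be an essential closed ideal of `A` (with the
subspace topology).  If `I` is semisimple and has a bounded Δ-weak approximate identity, then
`I` is a BSE-algebra. -/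
theorem essential_ideal_isBSEAlgebra
    {A : Type*} [CommRing A] [Algebra ℂ A] [UniformSpace A] [IsUniformAddGroup A]
    (hA : IsFrechetAlgebra A) (hAss : IsSemisimple A) (hABSE : IsBSEAlgebra A)
    (hdisc : DiscreteTopology (characterSpace ℂ A))
    (I : Ideal A) (hIc : IsClosed (I : Set A)) (hIe : IsEssentialIdeal I)
    (hIss : IsSemisimple ↥I)
    {Λ : Type*} [Preorder Λ] [IsDirected Λ (· ≤ ·)] [Nonempty Λ]
    (e : Λ → ↥I) (he : IsBoundedDeltaWeakApproximateIdentity e) :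
    IsBSEAlgebra ↥I :=
  essential_ideal_isBSEAlgebra_general hA hABSE hdisc I e he
end
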